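/- arXiv:1509.01460 — 4 statements merged into one kernel-verified Lean document; each statement's English description precedes it below -/
import Mathlib

section
/- Let u be analytic on D and φ an analytic self-map of D with 1 ≤ p < ∞, α > -1. If sup_{z∈D} (1-|z|^2)|u'(z)|/(1-|φ(z)|^2)^{(2+α)/p} < ∞ and sup_{z∈D} (1-|z|^2)|u(z)φ'(z)|/(1-|φ(z)|^2)^{(2+α+p)/p} < ∞, then the weighted composition operator uC_φ: A^p_α → B is bounded. -/
/-!
Point evaluations and derivatives are controlled on `A^p_α`. By the mean value property and
Jensen's inequality, `‖f w‖ ^ p` is at most the average of `‖f‖ ^ p` over the disc of radius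
`(1 - ‖w‖) / 2` about `w`, on which `1 - ‖z‖ ^ 2` is comparable to `1 - ‖w‖ ^ 2`; this gives
`‖f w‖ ≲ ‖f‖ (1 - ‖w‖ ^ 2) ^ (-(2 + α) / p)`, and the Cauchy estimate on the same disc gives
`‖f' w‖ ≲ ‖f‖ (1 - ‖w‖ ^ 2) ^ (-(2 + α + p) / p)`. After the product rule
`(u · f ∘ φ)' = u' · f ∘ φ + u φ' · f' ∘ φ`, the weights in the two hypotheses cancel exactly
those of these two estimates.
-/

open MeasureTheory Set Filter Topology Metric

noncomputable section

/-- The open unit disk in ℂ. -/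
def UD : Set ℂ := Metric.ball 0 1

/-- Membership in the weighted Bergman space `A^p_α`. -/
def memAp (p α : ℝ) (f : ℂ → ℂ) : Prop :=
  DifferentiableOn ℂ f UD ∧
    IntegrableOn (fun z => ‖f z‖ ^ p * (1 - ‖z‖ ^ 2) ^ α) UD volume

/-- The norm of `A^p_α` (with normalized area measure `dA = volume/π`). -/
def bergNorm (p α : ℝ) (f : ℂ → ℂ) : ℝ :=
  ((α + 1) * ((∫ z in UD, ‖f z‖ ^ p * (1 - ‖z‖ ^ 2) ^ α) / Real.pi)) ^ (1 / p)

open Real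

lemma add_polarCoord_symm_eq_circleMap (c : ℂ) (q : ℝ × ℝ) :
    c + Complex.polarCoord.symm q = circleMap c q.1 q.2 := by
  simp [circleMap, Complex.exp_mul_I, ← Complex.ofReal_cos, ← Complex.ofReal_sin]

lemma circleMap_mem_ball_iff {c : ℂ} {r s : ℝ} (θ : ℝ) :
    circleMap c s θ ∈ ball c r ↔ |s| < r := by
  rw [mem_ball, dist_eq_norm, circleMap_sub_center, norm_circleMap_zero]

lemma setIntegral_Ioo_circleMap_eq_circleAverage (F : ℂ → ℝ) (c : ℂ) (s : ℝ) :
    ∫ θ in Ioo (-π) π, F (circleMap c s θ) = 2 * π * circleAverage F c s := by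
  rw [circleAverage_eq_integral_add (-π),
    intervalIntegral.integral_comp_add_right (fun θ => F (circleMap c s θ)),
    ← integral_Ioc_eq_integral_Ioo, ← intervalIntegral.integral_of_le (by linarith [pi_pos]),
    smul_eq_mul, ← mul_assoc, mul_inv_cancel₀ (by positivity), one_mul]
  congr 1 <;> ring

lemma integral_ball_eq_integral_circleAverage {F : ℂ → ℝ} {c : ℂ} {r : ℝ} (hr : 0 ≤ r)
    (hF : ContinuousOn F (closedBall c r)) :
    ∫ z in ball c r, F z = ∫ s in 0..r, 2 * π * s * circleAverage F c s := by
  set G : ℝ × ℝ → ℝ := fun q => q.1 * F (circleMap c q.1 q.2)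
  have hpolar : ∫ z in ball c r, F z = ∫ q in Ioo 0 r ×ˢ Ioo (-π) π, G q := by
    calc ∫ z in ball c r, F z = ∫ ζ, (ball c r).indicator F (c + ζ) := by
          rw [← integral_indicator measurableSet_ball, integral_add_left_eq_self]
      _ = ∫ q in polarCoord.target,
            q.1 • (ball c r).indicator F (c + Complex.polarCoord.symm q) :=
          (Complex.integral_comp_polarCoord_symm _).symm
      _ = ∫ q in polarCoord.target, (Iio r ×ˢ univ).indicator G q := by
          refine setIntegral_congr_fun polarCoord.open_target.measurableSet fun q hq => ?_
          have hmem : circleMap c q.1 q.2 ∈ ball c r ↔ q ∈ Iio r ×ˢ univ := by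
            rw [circleMap_mem_ball_iff, abs_of_pos hq.1]
            simp
          rw [add_polarCoord_symm_eq_circleMap]
          by_cases h : q ∈ Iio r ×ˢ univ
          · simp [indicator_of_mem h, indicator_of_mem (hmem.mpr h), G]
          · simp [indicator_of_notMem h, indicator_of_notMem (mt hmem.mp h)]
      _ = _ := by
          rw [setIntegral_indicator (measurableSet_Iio.prod .univ), polarCoord_target,
            prod_inter_prod, Ioi_inter_Iio, inter_univ]
  have hG : IntegrableOn G (Ioo 0 r ×ˢ Ioo (-π) π) := by
    have hmaps : MapsTo (fun q : ℝ × ℝ => circleMap c q.1 q.2)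
        (Icc 0 r ×ˢ Icc (-π) π) (closedBall c r) := fun q hq =>
      closedBall_subset_closedBall hq.1.2 (circleMap_mem_closedBall c hq.1.1 q.2)
    have hcont : ContinuousOn G (Icc 0 r ×ˢ Icc (-π) π) :=
      continuousOn_fst.mul (hF.comp (by fun_prop) hmaps)
    exact (hcont.integrableOn_compact (isCompact_Icc.prod isCompact_Icc)).mono_set
      (prod_mono Ioo_subset_Icc_self Ioo_subset_Icc_self)
  rw [hpolar, Measure.volume_eq_prod, setIntegral_prod G hG,
    intervalIntegral.integral_of_le hr, integral_Ioc_eq_integral_Ioo]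
  refine setIntegral_congr_fun measurableSet_Ioo fun s _ => ?_
  simp only [G, integral_const_mul, setIntegral_Ioo_circleMap_eq_circleAverage]
  ring

lemma norm_circleAverage_le {E : Type*} [NormedAddCommGroup E] [NormedSpace ℝ E]
    (f : ℂ → E) (c : ℂ) (R : ℝ) :
    ‖circleAverage f c R‖ ≤ circleAverage (fun z => ‖f z‖) c R := by
  rw [circleAverage_def, circleAverage_def, norm_smul, smul_eq_mul, norm_inv,
    Real.norm_of_nonneg (by positivity)]
  gcongr
  exact intervalIntegral.norm_integral_le_integral_norm (by positivity)

lemma Complex.measureReal_ball (c : ℂ) {r : ℝ} (hr : 0 ≤ r) :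
    volume.real (ball c r) = π * r ^ 2 := by
  simp [measureReal_def, ENNReal.toReal_ofReal hr, mul_comm]

section MeanValue

variable {E : Type*} [NormedAddCommGroup E] [NormedSpace ℂ E] [CompleteSpace E]
  {f : ℂ → E} {c : ℂ} {r : ℝ}

lemma DiffContOnCl.norm_le_setAverage_norm_ball (hf : DiffContOnCl ℂ f (ball c r))
    (hr : 0 < r) : ‖f c‖ ≤ ⨍ z in ball c r, ‖f z‖ := by
  have hcont : ContinuousOn (fun z => ‖f z‖) (closedBall c r) := hf.continuousOn_ball.norm
  have hcircle : ∀ s ∈ Icc 0 r, ‖f c‖ ≤ Real.circleAverage (fun z => ‖f z‖) c s :=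
    fun s hs => by
      have hfs : DiffContOnCl ℂ f (ball c |s|) :=
        hf.mono (ball_subset_ball (by rw [abs_of_nonneg hs.1]; exact hs.2))
      rw [← hfs.circleAverage]
      exact norm_circleAverage_le f c s
  have hint : IntervalIntegrable
      (fun s => 2 * π * s * Real.circleAverage (fun z => ‖f z‖) c s) volume 0 r := by
    refine ContinuousOn.intervalIntegrable ?_
    rw [uIcc_of_le hr.le]
    exact (continuousOn_const.mul continuousOn_id).mul
      ((hcont.mono fun z hz => mem_closedBall_iff_norm.mpr hz.2).circleAverage fun s hs => hs.1)
  have hmean : π * r ^ 2 * ‖f c‖ ≤ ∫ z in ball c r, ‖f z‖ := by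
    rw [integral_ball_eq_integral_circleAverage hr.le hcont]
    calc π * r ^ 2 * ‖f c‖ = ∫ s in 0..r, 2 * π * s * ‖f c‖ := by
          rw [intervalIntegral.integral_mul_const, intervalIntegral.integral_const_mul,
            integral_id]
          ring
      _ ≤ _ := intervalIntegral.integral_mono_on hr.le
          (Continuous.intervalIntegrable (by fun_prop) _ _) hint
          fun s hs => mul_le_mul_of_nonneg_left (hcircle s hs) (by have := hs.1; positivity)
  rw [setAverage_eq, Complex.measureReal_ball c hr.le, smul_eq_mul,
    le_inv_mul_iff₀ (by positivity)]
  exact hmean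

lemma DiffContOnCl.norm_rpow_le_setAverage_ball (hf : DiffContOnCl ℂ f (ball c r))
    (hr : 0 < r) {p : ℝ} (hp : 1 ≤ p) : ‖f c‖ ^ p ≤ ⨍ z in ball c r, ‖f z‖ ^ p := by
  have hcont : ContinuousOn (fun z => ‖f z‖) (closedBall c r) := hf.continuousOn_ball.norm
  have hint : ∀ {g : ℂ → ℝ}, ContinuousOn g (closedBall c r) → IntegrableOn g (ball c r) :=
    fun hg => (hg.integrableOn_compact (isCompact_closedBall c r)).mono_set ball_subset_closedBall
  calc ‖f c‖ ^ p ≤ (⨍ z in ball c r, ‖f z‖) ^ p :=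
        rpow_le_rpow (norm_nonneg _) (hf.norm_le_setAverage_norm_ball hr) (by linarith)
    _ ≤ _ := (convexOn_rpow hp).map_set_average_le
        (continuous_rpow_const (by linarith)).continuousOn isClosed_Ici
        (measure_ball_pos volume c hr).ne' measure_ball_lt_top.ne
        (ae_of_all _ fun z => norm_nonneg (f z)) (hint hcont)
        (hint (hcont.rpow_const fun _ _ => Or.inr (by linarith)))

end MeanValue

lemma le_rpow_of_mem_Icc_div_mul {c x y : ℝ} (α : ℝ) (hc : 1 ≤ c) (hx : 0 < x)
    (hy : y ∈ Icc (x / c) (c * x)) : c ^ (-|α|) * x ^ α ≤ y ^ α := by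
  have hc₀ : 0 < c := by linarith
  rcases le_or_gt 0 α with hα | hα
  · calc c ^ (-|α|) * x ^ α = (x / c) ^ α := by
          rw [abs_of_nonneg hα, div_rpow hx.le hc₀.le, rpow_neg hc₀.le, inv_mul_eq_div]
      _ ≤ y ^ α := rpow_le_rpow (by positivity) hy.1 hα
  · calc c ^ (-|α|) * x ^ α = (c * x) ^ α := by
          rw [abs_of_neg hα, neg_neg, mul_rpow hc₀.le hx.le]
      _ ≤ y ^ α := rpow_le_rpow_of_nonpos ((div_pos hx hc₀).trans_le hy.1) hy.2 hα.le

lemma one_sub_sq_mem_Icc_of_mem_closedBall {w z : ℂ} (hw : ‖w‖ < 1)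
    (hz : z ∈ closedBall w ((1 - ‖w‖) / 2)) :
    1 - ‖z‖ ^ 2 ∈ Icc ((1 - ‖w‖ ^ 2) / 4) (4 * (1 - ‖w‖ ^ 2)) := by
  obtain ⟨h₁, h₂⟩ := abs_le.mp ((abs_norm_sub_norm_le z w).trans (mem_closedBall_iff_norm.mp hz))
  constructor <;> nlinarith [norm_nonneg z, norm_nonneg w]

lemma closedBall_subset_UD {w : ℂ} (hw : ‖w‖ < 1) : closedBall w ((1 - ‖w‖) / 2) ⊆ UD := by
  intro z hz
  have := (one_sub_sq_mem_Icc_of_mem_closedBall hw hz).1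
  rw [UD, mem_ball_zero_iff]
  nlinarith [norm_nonneg z, norm_nonneg w]

lemma one_sub_norm_sq_pos {z : ℂ} (hz : z ∈ UD) : 0 < 1 - ‖z‖ ^ 2 := by
  have := mem_ball_zero_iff.mp hz
  nlinarith [norm_nonneg z]

lemma setIntegral_UD_norm_rpow_mul_nonneg (p α : ℝ) (f : ℂ → ℂ) :
    0 ≤ ∫ z in UD, ‖f z‖ ^ p * (1 - ‖z‖ ^ 2) ^ α :=
  setIntegral_nonneg measurableSet_ball fun z hz =>
    have := one_sub_norm_sq_pos hz
    by positivity

lemma bergNorm_rpow {p α : ℝ} (hp : p ≠ 0) (hα : -1 < α) (f : ℂ → ℂ) :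
    bergNorm p α f ^ p = (α + 1) * ((∫ z in UD, ‖f z‖ ^ p * (1 - ‖z‖ ^ 2) ^ α) / π) := by
  have := setIntegral_UD_norm_rpow_mul_nonneg p α f
  have hα₁ : 0 < α + 1 := by linarith
  rw [bergNorm, one_div, rpow_inv_rpow (by positivity) hp]

lemma bergNorm_nonneg (p : ℝ) {α : ℝ} (hα : -1 < α) (f : ℂ → ℂ) : 0 ≤ bergNorm p α f := by
  have := setIntegral_UD_norm_rpow_mul_nonneg p α f
  have hα₁ : 0 < α + 1 := by linarith
  exact rpow_nonneg (by positivity) _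

lemma setIntegral_ball_norm_rpow_le {p α : ℝ} (hp : 0 ≤ p) {f : ℂ → ℂ} (hf : memAp p α f)
    {w : ℂ} (hw : ‖w‖ < 1) :
    ∫ z in ball w ((1 - ‖w‖) / 2), ‖f z‖ ^ p ≤
      4 ^ |α| * (1 - ‖w‖ ^ 2) ^ (-α) * ∫ z in UD, ‖f z‖ ^ p * (1 - ‖z‖ ^ 2) ^ α := by
  set X := 1 - ‖w‖ ^ 2
  have hX : 0 < X := one_sub_norm_sq_pos (mem_ball_zero_iff.mpr hw)
  have hsub := closedBall_subset_UD hw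
  have hweight : ∀ z ∈ ball w ((1 - ‖w‖) / 2),
      ‖f z‖ ^ p ≤ 4 ^ |α| * X ^ (-α) * (‖f z‖ ^ p * (1 - ‖z‖ ^ 2) ^ α) := fun z hz => by
    have hle := le_rpow_of_mem_Icc_div_mul α (by norm_num) hX
      (one_sub_sq_mem_Icc_of_mem_closedBall hw (ball_subset_closedBall hz))
    have h1 : 1 ≤ 4 ^ |α| * X ^ (-α) * (1 - ‖z‖ ^ 2) ^ α := by
      calc (1 : ℝ) = 4 ^ |α| * X ^ (-α) * (4 ^ (-|α|) * X ^ α) := by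
            rw [rpow_neg hX.le, rpow_neg (by norm_num : (0 : ℝ) ≤ 4)]
            field_simp
        _ ≤ _ := by gcongr
    calc ‖f z‖ ^ p = ‖f z‖ ^ p * 1 := (mul_one _).symm
      _ ≤ ‖f z‖ ^ p * (4 ^ |α| * X ^ (-α) * (1 - ‖z‖ ^ 2) ^ α) := by gcongr
      _ = _ := by ring
  have hcont : ContinuousOn (fun z => ‖f z‖ ^ p) (closedBall w ((1 - ‖w‖) / 2)) :=
    (hf.1.continuousOn.mono hsub).norm.rpow_const fun _ _ => Or.inr hp
  calc ∫ z in ball w ((1 - ‖w‖) / 2), ‖f z‖ ^ p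
      ≤ ∫ z in ball w ((1 - ‖w‖) / 2), 4 ^ |α| * X ^ (-α) * (‖f z‖ ^ p * (1 - ‖z‖ ^ 2) ^ α) :=
        setIntegral_mono_on
          ((hcont.integrableOn_compact (isCompact_closedBall _ _)).mono_set ball_subset_closedBall)
          ((hf.2.mono_set (ball_subset_closedBall.trans hsub)).const_mul _)
          measurableSet_ball hweight
    _ ≤ _ := by
        rw [integral_const_mul]
        refine mul_le_mul_of_nonneg_left (setIntegral_mono_set hf.2 ?_
          (ball_subset_closedBall.trans hsub).eventuallyLE) (by positivity)
        refine (ae_restrict_iff' measurableSet_ball).mpr (ae_of_all _ fun z hz => ?_)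
        have := one_sub_norm_sq_pos hz
        positivity

lemma norm_rpow_le_bergNorm_rpow {p α : ℝ} (hp : 1 ≤ p) (hα : -1 < α) {f : ℂ → ℂ}
    (hf : memAp p α f) {w : ℂ} (hw : w ∈ UD) :
    ‖f w‖ ^ p ≤ 16 * 4 ^ |α| / (α + 1) * bergNorm p α f ^ p * (1 - ‖w‖ ^ 2) ^ (-(2 + α)) := by
  have hw₁ : ‖w‖ < 1 := mem_ball_zero_iff.mp hw
  set X := 1 - ‖w‖ ^ 2
  have hX : 0 < X := one_sub_norm_sq_pos hw
  have hr : X / 4 ≤ (1 - ‖w‖) / 2 := by nlinarith [norm_nonneg w]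
  have hα₁ : 0 < α + 1 := by linarith
  calc ‖f w‖ ^ p ≤ ⨍ z in ball w ((1 - ‖w‖) / 2), ‖f z‖ ^ p :=
        (hf.1.diffContOnCl_ball (closedBall_subset_UD hw₁)).norm_rpow_le_setAverage_ball
          (by linarith) hp
    _ = (π * ((1 - ‖w‖) / 2) ^ 2)⁻¹ * ∫ z in ball w ((1 - ‖w‖) / 2), ‖f z‖ ^ p := by
        rw [setAverage_eq, Complex.measureReal_ball _ (by linarith), smul_eq_mul]
    _ ≤ (π * (X / 4) ^ 2)⁻¹ *
          (4 ^ |α| * X ^ (-α) * ∫ z in UD, ‖f z‖ ^ p * (1 - ‖z‖ ^ 2) ^ α) := by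
        gcongr
        exact setIntegral_ball_norm_rpow_le (by linarith) hf hw₁
    _ = _ := by
        rw [bergNorm_rpow (by linarith) hα, show -(2 + α) = -α - 2 by ring, rpow_sub hX,
          rpow_two]
        field_simp
        ring

lemma exists_norm_le_bergNorm {p α : ℝ} (hp : 1 ≤ p) (hα : -1 < α) :
    ∃ C : ℝ, ∀ f : ℂ → ℂ, memAp p α f → ∀ w ∈ UD,
      ‖f w‖ ≤ C * bergNorm p α f * (1 - ‖w‖ ^ 2) ^ (-((2 + α) / p)) := by
  refine ⟨(16 * 4 ^ |α| / (α + 1)) ^ (1 / p), fun f hf w hw => ?_⟩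
  have hp₀ : 0 < p := by linarith
  have hα₁ : 0 < α + 1 := by linarith
  have hX := one_sub_norm_sq_pos hw
  have hB := bergNorm_nonneg p hα f
  calc ‖f w‖ = (‖f w‖ ^ p) ^ (1 / p) := by
        rw [← rpow_mul (norm_nonneg _), mul_one_div_cancel hp₀.ne', rpow_one]
    _ ≤ (16 * 4 ^ |α| / (α + 1) * bergNorm p α f ^ p * (1 - ‖w‖ ^ 2) ^ (-(2 + α))) ^ (1 / p) :=
        rpow_le_rpow (by positivity) (norm_rpow_le_bergNorm_rpow hp hα hf hw) (by positivity)
    _ = _ := by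
        rw [mul_rpow (by positivity) (by positivity), mul_rpow (by positivity) (by positivity),
          ← rpow_mul hB, ← rpow_mul hX.le, mul_one_div_cancel hp₀.ne', rpow_one]
        ring_nf

lemma norm_deriv_le_of_norm_le_mul_rpow {E : Type*} [NormedAddCommGroup E] [NormedSpace ℂ E]
    {f : ℂ → E} (hf : DifferentiableOn ℂ f UD) {K e : ℝ} (he : 0 ≤ e)
    (hK : ∀ z ∈ UD, ‖f z‖ ≤ K * (1 - ‖z‖ ^ 2) ^ (-e)) {w : ℂ} (hw : w ∈ UD) :
    ‖deriv f w‖ ≤ 4 ^ (e + 1) * K * (1 - ‖w‖ ^ 2) ^ (-(e + 1)) := by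
  have hw₁ : ‖w‖ < 1 := mem_ball_zero_iff.mp hw
  set X := 1 - ‖w‖ ^ 2
  have hX : 0 < X := one_sub_norm_sq_pos hw
  have hρ : X / 4 ≤ (1 - ‖w‖) / 2 := by nlinarith [norm_nonneg w]
  have hK₀ : 0 ≤ K :=
    (mul_nonneg_iff_of_pos_right (rpow_pos_of_pos hX _)).mp ((norm_nonneg _).trans (hK w hw))
  have hsphere : ∀ z ∈ sphere w ((1 - ‖w‖) / 2), ‖f z‖ ≤ K * (X / 4) ^ (-e) := fun z hz => by
    have hz := sphere_subset_closedBall hz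
    have hY := (one_sub_sq_mem_Icc_of_mem_closedBall hw₁ hz).1
    calc ‖f z‖ ≤ K * (1 - ‖z‖ ^ 2) ^ (-e) := hK z (closedBall_subset_UD hw₁ hz)
      _ ≤ K * (X / 4) ^ (-e) := mul_le_mul_of_nonneg_left
          (rpow_le_rpow_of_nonpos (by positivity) hY (neg_nonpos.mpr he)) hK₀
  calc ‖deriv f w‖ ≤ K * (X / 4) ^ (-e) / ((1 - ‖w‖) / 2) :=
        Complex.norm_deriv_le_of_forall_mem_sphere_norm_le (by linarith)
          (hf.diffContOnCl_ball (closedBall_subset_UD hw₁)) hsphere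
    _ ≤ K * (X / 4) ^ (-e) / (X / 4) := by gcongr
    _ = _ := by
        rw [mul_div_assoc, ← rpow_sub_one (by positivity), div_rpow hX.le (by norm_num),
          show -e - 1 = -(e + 1) by ring, rpow_neg (by norm_num : (0 : ℝ) ≤ 4)]
        field_simp

lemma exists_norm_deriv_le_bergNorm {p α : ℝ} (hp : 1 ≤ p) (hα : -1 < α) :
    ∃ C : ℝ, ∀ f : ℂ → ℂ, memAp p α f → ∀ w ∈ UD,
      ‖deriv f w‖ ≤ C * bergNorm p α f * (1 - ‖w‖ ^ 2) ^ (-((2 + α + p) / p)) := by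
  obtain ⟨C, hC⟩ := exists_norm_le_bergNorm hp hα
  refine ⟨4 ^ ((2 + α + p) / p) * C, fun f hf w hw => ?_⟩
  have hderiv := norm_deriv_le_of_norm_le_mul_rpow hf.1
    (div_nonneg (by linarith) (by linarith)) (hC f hf) hw
  rwa [show (2 + α) / p + 1 = (2 + α + p) / p by field_simp, ← mul_assoc] at hderiv

lemma mul_le_mul_of_le_mul_rpow_of_le_mul_rpow_neg {a b M K Y e : ℝ} (hY : 0 < Y)
    (ha : 0 ≤ a) (hb : 0 ≤ b) (haM : a ≤ M * Y ^ e) (hbK : b ≤ K * Y ^ (-e)) :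
    a * b ≤ M * K :=
  calc a * b ≤ M * Y ^ e * (K * Y ^ (-e)) := mul_le_mul haM hbK hb (ha.trans haM)
    _ = M * K := by
      rw [rpow_neg hY.le]
      field_simp

lemma deriv_mul_comp {u φ f : ℂ → ℂ} {z : ℂ} (hu : DifferentiableAt ℂ u z)
    (hφ : DifferentiableAt ℂ φ z) (hf : DifferentiableAt ℂ f (φ z)) :
    deriv (fun w => u w * f (φ w)) z = deriv u z * f (φ z) + u z * deriv φ z * deriv f (φ z) := by
  have hfφ : HasDerivAt (fun w => f (φ w)) (deriv f (φ z) * deriv φ z) z :=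
    hf.hasDerivAt.comp z hφ.hasDerivAt
  rw [(hu.hasDerivAt.fun_mul hfφ).deriv]
  ring

/-- the two sup-conditions imply boundedness of `uC_φ : A^p_α → B`. -/
theorem stmt9 (p α : ℝ) (hp : 1 ≤ p) (hα : -1 < α) (u φ : ℂ → ℂ)
    (hu : DifferentiableOn ℂ u UD) (hφ : DifferentiableOn ℂ φ UD) (hφm : MapsTo φ UD UD)
    (h1 : ∃ M : ℝ, ∀ z ∈ UD,
      (1 - ‖z‖ ^ 2) * ‖deriv u z‖ ≤ M * (1 - ‖φ z‖ ^ 2) ^ ((2 + α) / p))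
    (h2 : ∃ M : ℝ, ∀ z ∈ UD,
      (1 - ‖z‖ ^ 2) * ‖u z * deriv φ z‖ ≤ M * (1 - ‖φ z‖ ^ 2) ^ ((2 + α + p) / p)) :
    ∃ C : ℝ, ∀ f : ℂ → ℂ, memAp p α f →
      ∀ z ∈ UD, ‖u 0 * f (φ 0)‖ +
        (1 - ‖z‖ ^ 2) * ‖deriv (fun w => u w * f (φ w)) z‖ ≤ C * bergNorm p α f := by
  obtain ⟨M₁, hM₁⟩ := h1
  obtain ⟨M₂, hM₂⟩ := h2
  obtain ⟨c₁, hc₁⟩ := exists_norm_le_bergNorm hp hα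
  obtain ⟨c₂, hc₂⟩ := exists_norm_deriv_le_bergNorm hp hα
  refine ⟨‖u 0‖ * c₁ * (1 - ‖φ 0‖ ^ 2) ^ (-((2 + α) / p)) + M₁ * c₁ + M₂ * c₂,
    fun f hf z hz => ?_⟩
  have hφz := hφm hz
  have hz₀ := (one_sub_norm_sq_pos hz).le
  have hderiv := deriv_mul_comp (hu.differentiableAt (isOpen_ball.mem_nhds hz))
    (hφ.differentiableAt (isOpen_ball.mem_nhds hz))
    (hf.1.differentiableAt (isOpen_ball.mem_nhds hφz))
  have hK : ‖u 0 * f (φ 0)‖ ≤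
      ‖u 0‖ * (c₁ * bergNorm p α f * (1 - ‖φ 0‖ ^ 2) ^ (-((2 + α) / p))) := by
    rw [norm_mul]
    exact mul_le_mul_of_nonneg_left (hc₁ f hf _ (hφm (mem_ball_self one_pos))) (norm_nonneg _)
  have hA : (1 - ‖z‖ ^ 2) * ‖deriv u z * f (φ z)‖ ≤ M₁ * (c₁ * bergNorm p α f) := by
    rw [norm_mul, ← mul_assoc]
    exact mul_le_mul_of_le_mul_rpow_of_le_mul_rpow_neg (one_sub_norm_sq_pos hφz)
      (by positivity) (norm_nonneg _) (hM₁ z hz) (hc₁ f hf _ hφz)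
  have hB : (1 - ‖z‖ ^ 2) * ‖u z * deriv φ z * deriv f (φ z)‖ ≤ M₂ * (c₂ * bergNorm p α f) := by
    rw [norm_mul _ (deriv f _), ← mul_assoc]
    exact mul_le_mul_of_le_mul_rpow_of_le_mul_rpow_neg (one_sub_norm_sq_pos hφz)
      (by positivity) (norm_nonneg _) (hM₂ z hz) (hc₂ f hf _ hφz)
  have htri := mul_le_mul_of_nonneg_left
    (norm_add_le (deriv u z * f (φ z)) (u z * deriv φ z * deriv f (φ z))) hz₀
  rw [hderiv]
  linarith
end
end

section
/- Let β > 0 and v_β(z) = (1-|z|^2)^β, v₁(z) = 1-|z|^2. For u analytic on D and φ: D → D analytic, the condition sup_{z∈D}(1-|z|^2)|u(z)|/(1-|φ(z)|^2)^β < ∞ holds if and only if sup_{k≥0} ||u·φ^k||_{v₁} / ||z^k||_{v_β} < ∞, and the two suprema are comparable up to constants depending only on β. -/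
open MeasureTheory Set Filter Topology Metric

noncomputable section

/-- `‖z^k‖_{v_β} = sup_{w∈D} |w|^k (1-|w|^2)^β`. -/
def monNorm (β : ℝ) (k : ℕ) : ℝ := ⨆ w ∈ UD, ‖w‖ ^ k * (1 - ‖w‖ ^ 2) ^ β

/-!
The forward bound is immediate: `|φ(z)|^k (1 - |φ(z)|²)^β ≤ ‖z^k‖_{v_β}`.
For the converse, `‖z^k‖_{v_β} ≤ (2β/k)^β` (from `r^k ≤ exp(-k(1-r²)/2)` and
`x^β ≤ β^β eˣ`), so at a point with `1 - |φ(z)|² = a` the exponent `k ≈ 2β/a` gives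
`‖z^k‖_{v_β} ≲ a^β` while `|φ(z)|^k` stays bounded below by `exp(-(4β+1))`.
-/

open Real

section

variable {β r : ℝ} {k : ℕ}

lemma mem_UD_iff {z : ℂ} : z ∈ UD ↔ ‖z‖ < 1 := mem_ball_zero_iff

lemma one_sub_sq_nonneg (hr0 : 0 ≤ r) (hr1 : r ≤ 1) : 0 ≤ 1 - r ^ 2 :=
  sub_nonneg.2 (pow_le_one₀ hr0 hr1)

lemma pow_mul_one_sub_sq_rpow_nonneg (hr0 : 0 ≤ r) (hr1 : r ≤ 1) :
    0 ≤ r ^ k * (1 - r ^ 2) ^ β :=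
  mul_nonneg (pow_nonneg hr0 k) (rpow_nonneg (one_sub_sq_nonneg hr0 hr1) β)

lemma pow_mul_one_sub_sq_rpow_le_one (hβ : 0 ≤ β) (hr0 : 0 ≤ r) (hr1 : r ≤ 1) :
    r ^ k * (1 - r ^ 2) ^ β ≤ 1 :=
  mul_le_one₀ (pow_le_one₀ hr0 hr1) (rpow_nonneg (one_sub_sq_nonneg hr0 hr1) β)
    (rpow_le_one (one_sub_sq_nonneg hr0 hr1) (by nlinarith) hβ)

lemma monNorm_nonneg : 0 ≤ monNorm β k :=
  Real.iSup_nonneg fun w => Real.iSup_nonneg fun hw =>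
    pow_mul_one_sub_sq_rpow_nonneg (norm_nonneg w) (mem_UD_iff.1 hw).le

lemma monNorm_le {B : ℝ} (hB : 0 ≤ B) (h : ∀ r, 0 ≤ r → r < 1 → r ^ k * (1 - r ^ 2) ^ β ≤ B) :
    monNorm β k ≤ B :=
  Real.iSup_le (fun w => Real.iSup_le (fun hw => h _ (norm_nonneg w) (mem_UD_iff.1 hw)) hB) hB

lemma le_monNorm (hβ : 0 ≤ β) {w : ℂ} (hw : w ∈ UD) :
    ‖w‖ ^ k * (1 - ‖w‖ ^ 2) ^ β ≤ monNorm β k := by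
  have hbdd : BddAbove (range fun v : ℂ => ⨆ _ : v ∈ UD, ‖v‖ ^ k * (1 - ‖v‖ ^ 2) ^ β) :=
    ⟨1, forall_mem_range.2 fun v => Real.iSup_le (fun hv =>
      pow_mul_one_sub_sq_rpow_le_one hβ (norm_nonneg v) (mem_UD_iff.1 hv).le) zero_le_one⟩
  exact le_ciSup_of_le hbdd w (ciSup_pos (f := fun _ => _) hw).ge

lemma monNorm_zero_le_one (hβ : 0 ≤ β) : monNorm β 0 ≤ 1 :=
  monNorm_le zero_le_one fun _ hr0 hr1 => pow_mul_one_sub_sq_rpow_le_one hβ hr0 hr1.le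

lemma rpow_le_rpow_mul_exp (hβ : 0 < β) {x : ℝ} (hx : 0 ≤ x) : x ^ β ≤ β ^ β * exp x := by
  have hxβ : x / β ≤ exp (x / β) := by linarith [add_one_le_exp (x / β)]
  calc x ^ β = β ^ β * (x / β) ^ β := by
        rw [← mul_rpow hβ.le (by positivity), mul_div_cancel₀ x hβ.ne']
    _ ≤ β ^ β * exp (x / β) ^ β := by gcongr
    _ = β ^ β * exp x := by rw [← exp_mul, div_mul_cancel₀ x hβ.ne']

lemma pow_mul_one_sub_sq_rpow_le (hβ : 0 < β) (hr0 : 0 ≤ r) (hr1 : r ≤ 1) (hk : k ≠ 0) :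
    r ^ k * (1 - r ^ 2) ^ β ≤ (2 * β / k) ^ β := by
  set a := 1 - r ^ 2
  have ha : 0 ≤ a := one_sub_sq_nonneg hr0 hr1
  have hk' : (0 : ℝ) < k := by exact_mod_cast Nat.pos_of_ne_zero hk
  -- `r ≤ exp (-a / 2)` because `r ^ 2 = 1 - a ≤ exp (-a)`
  have hr : r ≤ exp (-a / 2) := by
    refine (pow_le_pow_iff_left₀ hr0 (exp_pos _).le two_ne_zero).1 ?_
    rw [← exp_nat_mul, Nat.cast_two, mul_div_cancel₀ _ two_ne_zero]
    linarith [one_sub_le_exp_neg a]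
  calc r ^ k * a ^ β
      ≤ exp (-a / 2) ^ k * ((2 / k) ^ β * (β ^ β * exp (a * k / 2))) := by
        gcongr
        calc a ^ β = (2 / k) ^ β * (a * k / 2) ^ β := by
              rw [← mul_rpow (by positivity) (by positivity)]; field_simp
          _ ≤ _ := by gcongr; exact rpow_le_rpow_mul_exp hβ (by positivity)
    _ = (2 * β / k) ^ β := by
        have hexp : exp (-a / 2) ^ k * exp (a * k / 2) = 1 := by
          rw [← exp_nat_mul, ← exp_add]; ring_nf; exact exp_zero
        have hrpow : (2 / k : ℝ) ^ β * β ^ β = (2 * β / k) ^ β := by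
          rw [← mul_rpow (by positivity) hβ.le]; ring_nf
        linear_combination ((2 / k : ℝ) ^ β * β ^ β) * hexp + hrpow

lemma monNorm_le_rpow_div (hβ : 0 < β) (hk : k ≠ 0) : monNorm β k ≤ (2 * β / k) ^ β :=
  monNorm_le (by positivity) fun _ hr0 hr1 => pow_mul_one_sub_sq_rpow_le hβ hr0 hr1.le hk

lemma exp_neg_two_mul_le_one_sub {s : ℝ} (hs0 : 0 ≤ s) (hs1 : s ≤ 1 / 2) :
    exp (-(2 * s)) ≤ 1 - s := by
  rw [exp_neg, inv_le_iff_one_le_mul₀ (exp_pos _)]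
  nlinarith [add_one_le_exp (2 * s)]

/-- For every radius `t` some monomial `z ^ k` nearly attains its weighted norm on `|z| = t`:
the optimal exponent is of order `β / (1 - t ^ 2)`. -/
lemma exists_pow_ge_and_monNorm_le (hβ : 0 < β) {t : ℝ} (ht0 : 0 ≤ t) (ht1 : t < 1) :
    ∃ k : ℕ, exp (-(4 * β + 1)) ≤ t ^ k ∧ monNorm β k ≤ (2 * (1 - t ^ 2)) ^ β := by
  set a := 1 - t ^ 2
  have ha : 0 < a := by nlinarith
  rcases le_or_gt (1 / 2) a with ha_large | ha_small
  · refine ⟨0, by rw [pow_zero, exp_le_one_iff]; linarith, (monNorm_zero_le_one hβ.le).trans ?_⟩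
    exact one_le_rpow (by linarith) hβ.le
  · set k := ⌈2 * β / a⌉₊
    have hk : 2 * β / a ≤ k := Nat.le_ceil _
    have hk' : (k : ℝ) < 2 * β / a + 1 := Nat.ceil_lt_add_one (by positivity)
    have hk0 : k ≠ 0 := Nat.ceil_pos.2 (by positivity) |>.ne'
    refine ⟨k, ?_, ?_⟩
    · calc exp (-(4 * β + 1)) ≤ exp (-(2 * a)) ^ k := by
            rw [← exp_nat_mul, exp_le_exp]
            have : a * k ≤ 2 * β + a := by
              rw [div_add_one ha.ne'] at hk'
              nlinarith [(lt_div_iff₀ ha).1 hk']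
            nlinarith
        _ ≤ (t ^ 2) ^ k := by
            gcongr
            linarith [exp_neg_two_mul_le_one_sub ha.le ha_small.le]
        _ ≤ t ^ k := by
            rw [← pow_mul]
            exact pow_le_pow_of_le_one ht0 ht1.le (by omega)
    · calc monNorm β k ≤ (2 * β / k) ^ β := monNorm_le_rpow_div hβ hk0
        _ ≤ (2 * a) ^ β := by
            gcongr
            rw [div_le_iff₀ (by positivity)]
            nlinarith [(div_le_iff₀ ha).1 hk]

lemma le_of_forall_mul_pow_le_monNorm (hβ : 0 < β) {t X M : ℝ} (ht0 : 0 ≤ t) (ht1 : t < 1)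
    (hX : 0 ≤ X) (hM : 0 ≤ M) (H : ∀ k : ℕ, X * t ^ k ≤ M * monNorm β k) :
    X ≤ 2 ^ β * exp (4 * β + 1) * M * (1 - t ^ 2) ^ β := by
  obtain ⟨k, htk, hk⟩ := exists_pow_ge_and_monNorm_le hβ ht0 ht1
  have ha : 0 ≤ 1 - t ^ 2 := one_sub_sq_nonneg ht0 ht1.le
  calc X = exp (4 * β + 1) * (X * exp (-(4 * β + 1))) := by
        rw [mul_left_comm, ← exp_add, add_neg_cancel, exp_zero, mul_one]
    _ ≤ exp (4 * β + 1) * (M * (2 * (1 - t ^ 2)) ^ β) := by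
        refine mul_le_mul_of_nonneg_left ?_ (exp_pos _).le
        calc X * exp (-(4 * β + 1)) ≤ X * t ^ k := by gcongr
          _ ≤ M * monNorm β k := H k
          _ ≤ M * (2 * (1 - t ^ 2)) ^ β := by gcongr
    _ = 2 ^ β * exp (4 * β + 1) * M * (1 - t ^ 2) ^ β := by
        rw [mul_rpow zero_le_two ha]; ring

lemma weighted_mul_pow_le_monNorm (hβ : 0 ≤ β) {u φ : ℂ → ℂ} (hφ : MapsTo φ UD UD) {M : ℝ}
    (hM : 0 ≤ M) (H : ∀ z ∈ UD, (1 - ‖z‖ ^ 2) * ‖u z‖ ≤ M * (1 - ‖φ z‖ ^ 2) ^ β)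
    (k : ℕ) {z : ℂ} (hz : z ∈ UD) : (1 - ‖z‖ ^ 2) * ‖u z * φ z ^ k‖ ≤ M * monNorm β k :=
  calc (1 - ‖z‖ ^ 2) * ‖u z * φ z ^ k‖ = (1 - ‖z‖ ^ 2) * ‖u z‖ * ‖φ z‖ ^ k := by
        rw [norm_mul, norm_pow, mul_assoc]
    _ ≤ M * (1 - ‖φ z‖ ^ 2) ^ β * ‖φ z‖ ^ k := by gcongr ?_ * _; exact H z hz
    _ = M * (‖φ z‖ ^ k * (1 - ‖φ z‖ ^ 2) ^ β) := by ring
    _ ≤ M * monNorm β k := by gcongr; exact le_monNorm hβ (hφ hz)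

lemma weighted_le_of_forall_mul_pow_le_monNorm (hβ : 0 < β) {u φ : ℂ → ℂ}
    (hφ : MapsTo φ UD UD) {M : ℝ} (hM : 0 ≤ M)
    (H : ∀ k : ℕ, ∀ z ∈ UD, (1 - ‖z‖ ^ 2) * ‖u z * φ z ^ k‖ ≤ M * monNorm β k)
    {z : ℂ} (hz : z ∈ UD) :
    (1 - ‖z‖ ^ 2) * ‖u z‖ ≤ 2 ^ β * exp (4 * β + 1) * M * (1 - ‖φ z‖ ^ 2) ^ β := by
  have hz1 := mem_UD_iff.1 hz
  refine le_of_forall_mul_pow_le_monNorm hβ (norm_nonneg _) (mem_UD_iff.1 (hφ hz))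
    (mul_nonneg (one_sub_sq_nonneg (norm_nonneg z) hz1.le) (norm_nonneg _)) hM fun k => ?_
  simpa only [norm_mul, norm_pow, mul_assoc] using H k z hz

end

/-- `sup_{z∈D}(1-|z|^2)|u(z)|/(1-|φ(z)|^2)^β < ∞` iff
`sup_{k≥0} ‖uφ^k‖_{v₁}/‖z^k‖_{v_β} < ∞`, with two-sided comparability of the bounds by a
constant depending only on `β`. -/
theorem stmt11 (β : ℝ) (hβ : 0 < β) :
    ∃ C : ℝ, 0 < C ∧
      ∀ u φ : ℂ → ℂ, DifferentiableOn ℂ u UD → DifferentiableOn ℂ φ UD → MapsTo φ UD UD →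
        ((∃ M : ℝ, ∀ z ∈ UD, (1 - ‖z‖ ^ 2) * ‖u z‖ ≤ M * (1 - ‖φ z‖ ^ 2) ^ β) ↔
          (∃ M : ℝ, ∀ k : ℕ, ∀ z ∈ UD,
            (1 - ‖z‖ ^ 2) * ‖u z * φ z ^ k‖ ≤ M * monNorm β k)) ∧
        ∀ M : ℝ, 0 ≤ M →
          ((∀ z ∈ UD, (1 - ‖z‖ ^ 2) * ‖u z‖ ≤ M * (1 - ‖φ z‖ ^ 2) ^ β) →
            ∀ k : ℕ, ∀ z ∈ UD, (1 - ‖z‖ ^ 2) * ‖u z * φ z ^ k‖ ≤ (C * M) * monNorm β k) ∧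
          ((∀ k : ℕ, ∀ z ∈ UD, (1 - ‖z‖ ^ 2) * ‖u z * φ z ^ k‖ ≤ M * monNorm β k) →
            ∀ z ∈ UD, (1 - ‖z‖ ^ 2) * ‖u z‖ ≤ (C * M) * (1 - ‖φ z‖ ^ 2) ^ β) := by
  set C := 2 ^ β * exp (4 * β + 1)
  have hC : 1 ≤ C := one_le_mul_of_one_le_of_one_le (one_le_rpow one_le_two hβ.le)
    (one_le_exp (by linarith))
  refine ⟨C, by linarith, fun u φ _ _ hφ => ?_⟩
  have forward (M : ℝ) (hM : 0 ≤ M)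
      (H : ∀ z ∈ UD, (1 - ‖z‖ ^ 2) * ‖u z‖ ≤ M * (1 - ‖φ z‖ ^ 2) ^ β) (k : ℕ) (z : ℂ)
      (hz : z ∈ UD) : (1 - ‖z‖ ^ 2) * ‖u z * φ z ^ k‖ ≤ (C * M) * monNorm β k :=
    (weighted_mul_pow_le_monNorm hβ.le hφ hM H k hz).trans
      (mul_le_mul_of_nonneg_right (le_mul_of_one_le_left hM hC) monNorm_nonneg)
  have backward (M : ℝ) (hM : 0 ≤ M)
      (H : ∀ k : ℕ, ∀ z ∈ UD, (1 - ‖z‖ ^ 2) * ‖u z * φ z ^ k‖ ≤ M * monNorm β k) (z : ℂ)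
      (hz : z ∈ UD) : (1 - ‖z‖ ^ 2) * ‖u z‖ ≤ (C * M) * (1 - ‖φ z‖ ^ 2) ^ β :=
    weighted_le_of_forall_mul_pow_le_monNorm hβ hφ hM H hz
  have hφz {z : ℂ} (hz : z ∈ UD) : 0 ≤ 1 - ‖φ z‖ ^ 2 :=
    one_sub_sq_nonneg (norm_nonneg _) (mem_UD_iff.1 (hφ hz)).le
  refine ⟨⟨fun ⟨M, H⟩ => ⟨_, forward (max M 0) (le_max_right M 0) fun z hz => ?_⟩,
    fun ⟨M, H⟩ => ⟨_, backward (max M 0) (le_max_right M 0) fun k z hz => ?_⟩⟩,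
    fun M hM => ⟨forward M hM, backward M hM⟩⟩
  · exact (H z hz).trans (by gcongr; exacts [rpow_nonneg (hφz hz) β, le_max_left M 0])
  · exact (H k z hz).trans (by gcongr; exacts [monNorm_nonneg, le_max_left M 0])
end
end

section
/- Let u be analytic on D and φ an analytic self-map of D, 1 ≤ p < ∞, α > -1. The conditions sup_{z∈D}(1-|z|^2)|u'(z)|/(1-|φ(z)|^2)^{(2+α)/p} < ∞ and sup_{z∈D}(1-|z|^2)|u(z)φ'(z)|/(1-|φ(z)|^2)^{(2+α+p)/p} < ∞ hold if and only if sup_{j≥1} j^{(2+α)/p}||I_u(φ^j)||_B < ∞ and sup_{j≥1} j^{(2+α)/p}||J_u(φ^{j-1})||_B < ∞, where I_u g(z) = ∫₀^z g'(ξ)u(ξ)dξ and J_u g(z) = ∫₀^z g(ξ)u'(ξ)dξ. -/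
/-!
Since `(I_u φ^j)' = j u φ' φ^(j-1)` and `(J_u φ^(j-1))' = u' φ^(j-1)`, each condition on the right
reads `sup_{n ≥ 1, z} n^β r(z)^(n-1) A(z) < ∞` with `r = |φ|`, where `β = γ + 1`,
`A = (1-|z|²)|u φ'|` for `I_u` and `β = γ`, `A = (1-|z|²)|u'|` for `J_u` (`γ = (2+α)/p`).
This is equivalent to `A ≲ (1-r²)^β` because `sup_{n ≥ 1} n^β r^(n-1) ≍ (1-r²)^(-β)` uniformly
on `[0,1)`: the upper bound follows from `r^(n-1) ≤ e·exp(-n(1-r))` and `s^β e^(-s) ≤ (β/e)^β`,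
the lower bound from `n = ⌈1/(2(1-r))⌉`, for which Bernoulli gives `r^(n-1) ≥ 1/2`.
The derivative formulas hold because on a disc the segment integral `∫₀¹ f(tz) z dt` equals
`F z - F 0` for a primitive `F` of `f`.
-/

open MeasureTheory Set Filter Topology Metric

noncomputable section

/-- `I_u g (z) = ∫₀^z g'(ξ) u(ξ) dξ` (integration along the segment from 0 to z). -/
def Iu (u g : ℂ → ℂ) (z : ℂ) : ℂ :=
  ∫ t in (0 : ℝ)..1, deriv g ((t : ℂ) * z) * u ((t : ℂ) * z) * z

/-- `J_u g (z) = ∫₀^z g(ξ) u'(ξ) dξ` (integration along the segment from 0 to z). -/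
def Ju (u g : ℂ → ℂ) (z : ℂ) : ℂ :=
  ∫ t in (0 : ℝ)..1, g ((t : ℂ) * z) * deriv u ((t : ℂ) * z) * z

section WeightedPowers

open Real

theorem rpow_mul_exp_neg_le {β s : ℝ} (hβ : 0 < β) (hs : 0 ≤ s) :
    s ^ β * exp (-s) ≤ (β / exp 1) ^ β := by
  calc s ^ β * exp (-s) = (s * exp (-(s / β))) ^ β := by
        rw [mul_rpow hs (exp_pos _).le, ← exp_mul]
        field_simp
    _ = (β * (s / β * exp (-(s / β)))) ^ β := by field_simp
    _ ≤ (β * exp (-1)) ^ β := by gcongr; exact mul_exp_neg_le_exp_neg_one _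
    _ = (β / exp 1) ^ β := by rw [exp_neg, div_eq_mul_inv]

theorem pow_sub_one_le_exp_one_mul_exp {r : ℝ} (hr₀ : 0 ≤ r) (n : ℕ) :
    r ^ (n - 1) ≤ exp 1 * exp (-(n * (1 - r))) := by
  have hn : (n : ℝ) ≤ ((n - 1 : ℕ) : ℝ) + 1 := by exact_mod_cast (by omega : n ≤ n - 1 + 1)
  calc r ^ (n - 1) ≤ exp (r - 1) ^ (n - 1) := by
        gcongr; linarith [add_one_le_exp (r - 1)]
    _ = exp (((n - 1 : ℕ) : ℝ) * (r - 1)) := by rw [exp_nat_mul]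
    _ ≤ exp (1 + -(n * (1 - r))) := by
        gcongr
        rcases n with _ | n
        · simp
        · push_cast; linarith
    _ = exp 1 * exp (-(n * (1 - r))) := exp_add _ _

theorem rpow_mul_pow_mul_one_sub_sq_rpow_le {β r : ℝ} (hβ : 0 < β) (hr₀ : 0 ≤ r) (hr₁ : r ≤ 1)
    (n : ℕ) : (n : ℝ) ^ β * (r ^ (n - 1) * (1 - r ^ 2) ^ β) ≤ 2 ^ β * exp 1 * (β / exp 1) ^ β := by
  set s : ℝ := n * (1 - r)
  have hs : 0 ≤ s := by positivity
  calc (n : ℝ) ^ β * (r ^ (n - 1) * (1 - r ^ 2) ^ β)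
      ≤ (n : ℝ) ^ β * ((exp 1 * exp (-s)) * (2 * (1 - r)) ^ β) := by
        have hsq : 0 ≤ 1 - r ^ 2 := by nlinarith
        gcongr
        · exact pow_sub_one_le_exp_one_mul_exp hr₀ n
        · nlinarith
    _ = 2 ^ β * exp 1 * (s ^ β * exp (-s)) := by
        rw [mul_rpow zero_le_two (by linarith), mul_rpow (by positivity) (by linarith)]
        ring
    _ ≤ 2 ^ β * exp 1 * (β / exp 1) ^ β := by
        gcongr; exact rpow_mul_exp_neg_le hβ hs

theorem exists_one_le_rpow_mul_pow_mul_one_sub_sq_rpow {β r : ℝ} (hβ : 0 ≤ β) (hr₀ : 0 ≤ r)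
    (hr₁ : r < 1) : ∃ n : ℕ, 1 ≤ n ∧
      1 ≤ 2 ^ (β + 1) * ((n : ℝ) ^ β * (r ^ (n - 1) * (1 - r ^ 2) ^ β)) := by
  set d := 1 - r
  have hd : 0 < d := by linarith
  set n := ⌈1 / (2 * d)⌉₊
  have hn₁ : 1 ≤ n := Nat.ceil_pos.mpr (by positivity)
  have hn_ge : 1 / (2 * d) ≤ n := Nat.le_ceil _
  have hn_lt : ((n - 1 : ℕ) : ℝ) * d ≤ 1 / 2 := by
    have := Nat.ceil_lt_add_one (by positivity : (0 : ℝ) ≤ 1 / (2 * d))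
    rw [Nat.cast_sub hn₁, Nat.cast_one]
    calc ((n : ℝ) - 1) * d ≤ 1 / (2 * d) * d := by gcongr; linarith
      _ = 1 / 2 := by field_simp
  have hpow : 1 / 2 ≤ r ^ (n - 1) := by
    have := one_add_mul_le_pow (a := r - 1) (by linarith) (n - 1)
    rw [add_sub_cancel] at this
    nlinarith
  have hbase : 1 / 2 ≤ n * (1 - r ^ 2) := by
    calc (1 : ℝ) / 2 = 1 / (2 * d) * d := by field_simp
      _ ≤ n * (1 - r ^ 2) := by gcongr; nlinarith
  refine ⟨n, hn₁, ?_⟩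
  calc (1 : ℝ) = 2 ^ β * (1 / 2) ^ β * 2 * (1 / 2) := by
        rw [← mul_rpow zero_le_two (by norm_num)]; norm_num
    _ ≤ 2 ^ β * (n * (1 - r ^ 2)) ^ β * 2 * r ^ (n - 1) := by gcongr
    _ = 2 ^ (β + 1) * ((n : ℝ) ^ β * (r ^ (n - 1) * (1 - r ^ 2) ^ β)) := by
        rw [rpow_add_one two_ne_zero, mul_rpow (by positivity) (by nlinarith)]
        ring

theorem exists_bound_mul_one_sub_sq_rpow_iff {ι : Type*} {s : Set ι} {β : ℝ} (hβ : 0 < β)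
    {r A : ι → ℝ} (hr : ∀ z ∈ s, 0 ≤ r z ∧ r z < 1) (hA : ∀ z ∈ s, 0 ≤ A z) :
    (∃ M, ∀ z ∈ s, A z ≤ M * (1 - r z ^ 2) ^ β) ↔
      ∃ M, ∀ n : ℕ, 1 ≤ n → ∀ z ∈ s, (n : ℝ) ^ β * (r z ^ (n - 1) * A z) ≤ M := by
  constructor
  · rintro ⟨M, hM⟩
    refine ⟨max M 0 * (2 ^ β * exp 1 * (β / exp 1) ^ β), fun n _ z hz => ?_⟩
    obtain ⟨hr₀, hr₁⟩ := hr z hz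
    calc (n : ℝ) ^ β * (r z ^ (n - 1) * A z)
        ≤ (n : ℝ) ^ β * (r z ^ (n - 1) * (max M 0 * (1 - r z ^ 2) ^ β)) := by
          have : 0 ≤ 1 - r z ^ 2 := by nlinarith
          gcongr
          exact (hM z hz).trans (by gcongr; exact le_max_left _ _)
      _ = max M 0 * ((n : ℝ) ^ β * (r z ^ (n - 1) * (1 - r z ^ 2) ^ β)) := by ring
      _ ≤ max M 0 * (2 ^ β * exp 1 * (β / exp 1) ^ β) :=
          mul_le_mul_of_nonneg_left (rpow_mul_pow_mul_one_sub_sq_rpow_le hβ hr₀ hr₁.le n)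
            (le_max_right _ _)
  · rintro ⟨M, hM⟩
    refine ⟨2 ^ (β + 1) * M, fun z hz => ?_⟩
    obtain ⟨hr₀, hr₁⟩ := hr z hz
    obtain ⟨n, hn, hle⟩ := exists_one_le_rpow_mul_pow_mul_one_sub_sq_rpow hβ.le hr₀ hr₁
    calc A z ≤ 2 ^ (β + 1) * ((n : ℝ) ^ β * (r z ^ (n - 1) * (1 - r z ^ 2) ^ β)) * A z :=
          le_mul_of_one_le_left (hA z hz) hle
      _ = 2 ^ (β + 1) * ((n : ℝ) ^ β * (r z ^ (n - 1) * A z)) * (1 - r z ^ 2) ^ β := by ring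
      _ ≤ 2 ^ (β + 1) * M * (1 - r z ^ 2) ^ β := by
          have : 0 ≤ 1 - r z ^ 2 := by nlinarith
          gcongr
          exact hM n hn z hz

end WeightedPowers

theorem integral_segment_eq_sub {f F : ℂ → ℂ} {R : ℝ} (hf : ContinuousOn f (ball 0 R))
    (hF : ∀ w ∈ ball (0 : ℂ) R, HasDerivAt F (f w) w) {z : ℂ} (hz : z ∈ ball (0 : ℂ) R) :
    ∫ t in (0 : ℝ)..1, f ((t : ℂ) * z) * z = F z - F 0 := by
  have hseg : ∀ t ∈ uIcc (0 : ℝ) 1, (t : ℂ) * z ∈ ball (0 : ℂ) R := by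
    intro t ht
    rw [uIcc_of_le zero_le_one] at ht
    rw [mem_ball_zero_iff] at hz ⊢
    rw [norm_mul, Complex.norm_real, Real.norm_eq_abs, abs_of_nonneg ht.1]
    nlinarith [norm_nonneg z, ht.2]
  have hderiv : ∀ t ∈ uIcc (0 : ℝ) 1,
      HasDerivAt (fun s : ℝ => F ((s : ℂ) * z)) (f ((t : ℂ) * z) * z) t := fun t ht =>
    HasDerivAt.comp_ofReal (e := fun w => F (w * z))
      ((hF _ (hseg t ht)).comp (t : ℂ) (hasDerivAt_mul_const z))
  have hcont : ContinuousOn (fun t : ℝ => f ((t : ℂ) * z) * z) (uIcc 0 1) :=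
    (hf.comp (by fun_prop) hseg).mul continuousOn_const
  rw [intervalIntegral.integral_eq_sub_of_hasDerivAt hderiv hcont.intervalIntegrable]
  simp

theorem hasDerivAt_integral_segment {f : ℂ → ℂ} {R : ℝ} (hf : DifferentiableOn ℂ f (ball 0 R))
    {z : ℂ} (hz : z ∈ ball (0 : ℂ) R) :
    HasDerivAt (fun w => ∫ t in (0 : ℝ)..1, f ((t : ℂ) * w) * w) (f z) z := by
  obtain ⟨F, hF⟩ := hf.isExactOn_ball
  refine ((hF z hz).sub_const (F 0)).congr_of_eventuallyEq ?_
  filter_upwards [isOpen_ball.mem_nhds hz] with w hw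
  exact integral_segment_eq_sub hf.continuousOn hF hw

theorem hasDerivAt_Iu {u g : ℂ → ℂ} {R : ℝ} (hu : DifferentiableOn ℂ u (ball 0 R))
    (hg : DifferentiableOn ℂ g (ball 0 R)) {z : ℂ} (hz : z ∈ ball (0 : ℂ) R) :
    HasDerivAt (Iu u g) (deriv g z * u z) z :=
  hasDerivAt_integral_segment ((hg.deriv isOpen_ball).mul hu) hz

theorem hasDerivAt_Ju {u g : ℂ → ℂ} {R : ℝ} (hu : DifferentiableOn ℂ u (ball 0 R))
    (hg : DifferentiableOn ℂ g (ball 0 R)) {z : ℂ} (hz : z ∈ ball (0 : ℂ) R) :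
    HasDerivAt (Ju u g) (g z * deriv u z) z :=
  hasDerivAt_integral_segment (hg.mul (hu.deriv isOpen_ball)) hz

theorem norm_deriv_Iu_pow {u φ : ℂ → ℂ} {R : ℝ} (hu : DifferentiableOn ℂ u (ball 0 R))
    (hφ : DifferentiableOn ℂ φ (ball 0 R)) {z : ℂ} (hz : z ∈ ball (0 : ℂ) R) (j : ℕ) :
    ‖deriv (Iu u (φ ^ j)) z‖ = j * (‖φ z‖ ^ (j - 1) * ‖u z * deriv φ z‖) := by
  have hpow : HasDerivAt (φ ^ j) (j * φ z ^ (j - 1) * deriv φ z) z :=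
    (hφ.differentiableAt (isOpen_ball.mem_nhds hz)).hasDerivAt.pow j
  rw [(hasDerivAt_Iu hu (hφ.pow j) hz).deriv, hpow.deriv]
  simp only [norm_mul, norm_pow, Complex.norm_natCast]
  ring

theorem norm_deriv_Ju_pow {u φ : ℂ → ℂ} {R : ℝ} (hu : DifferentiableOn ℂ u (ball 0 R))
    (hφ : DifferentiableOn ℂ φ (ball 0 R)) {z : ℂ} (hz : z ∈ ball (0 : ℂ) R) (k : ℕ) :
    ‖deriv (Ju u (φ ^ k)) z‖ = ‖φ z‖ ^ k * ‖deriv u z‖ := by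
  rw [(hasDerivAt_Ju hu (hφ.pow k) hz).deriv, norm_mul, Pi.pow_apply, norm_pow]

/-- the two sup-conditions characterizing boundedness of `uC_φ : A^p_α → B`
hold iff `sup_{j≥1} j^{(2+α)/p} ‖I_u(φ^j)‖_B < ∞` and `sup_{j≥1} j^{(2+α)/p} ‖J_u(φ^{j-1})‖_B < ∞`. -/
theorem stmt12 (p α : ℝ) (hp : 1 ≤ p) (hα : -1 < α) (u φ : ℂ → ℂ)
    (hu : DifferentiableOn ℂ u UD) (hφ : DifferentiableOn ℂ φ UD) (hφm : MapsTo φ UD UD) :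
    ((∃ M : ℝ, ∀ z ∈ UD,
        (1 - ‖z‖ ^ 2) * ‖deriv u z‖ ≤ M * (1 - ‖φ z‖ ^ 2) ^ ((2 + α) / p)) ∧
      (∃ M : ℝ, ∀ z ∈ UD,
        (1 - ‖z‖ ^ 2) * ‖u z * deriv φ z‖ ≤ M * (1 - ‖φ z‖ ^ 2) ^ ((2 + α + p) / p))) ↔
    ((∃ M : ℝ, ∀ j : ℕ, 1 ≤ j → ∀ z ∈ UD,
        (j : ℝ) ^ ((2 + α) / p) * ((1 - ‖z‖ ^ 2) * ‖deriv (Iu u (φ ^ j)) z‖) ≤ M) ∧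
      (∃ M : ℝ, ∀ j : ℕ, 1 ≤ j → ∀ z ∈ UD,
        (j : ℝ) ^ ((2 + α) / p) * ((1 - ‖z‖ ^ 2) * ‖deriv (Ju u (φ ^ (j - 1))) z‖) ≤ M)) := by
  set γ := (2 + α) / p with hγ_def
  have hγ : 0 < γ := div_pos (by linarith) (by linarith)
  have hexp : (2 + α + p) / p = γ + 1 := by rw [hγ_def]; field_simp
  have hφ_mem : ∀ z ∈ UD, 0 ≤ ‖φ z‖ ∧ ‖φ z‖ < 1 := fun z hz =>
    ⟨norm_nonneg _, mem_ball_zero_iff.mp (hφm hz)⟩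
  have hweight : ∀ a : ℂ → ℂ, ∀ z ∈ UD, 0 ≤ (1 - ‖z‖ ^ 2) * ‖a z‖ := fun a z hz =>
    mul_nonneg (by nlinarith [mem_ball_zero_iff.mp hz, norm_nonneg z]) (norm_nonneg _)
  have hI : ∀ j : ℕ, ∀ z ∈ UD, (j : ℝ) ^ γ * ((1 - ‖z‖ ^ 2) * ‖deriv (Iu u (φ ^ j)) z‖) =
      (j : ℝ) ^ (γ + 1) * (‖φ z‖ ^ (j - 1) * ((1 - ‖z‖ ^ 2) * ‖u z * deriv φ z‖)) := by
    intro j z hz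
    rw [norm_deriv_Iu_pow hu hφ hz, Real.rpow_add_one' (Nat.cast_nonneg j) (by positivity)]
    ring
  have hJ : ∀ j : ℕ, ∀ z ∈ UD, (j : ℝ) ^ γ * ((1 - ‖z‖ ^ 2) * ‖deriv (Ju u (φ ^ (j - 1))) z‖) =
      (j : ℝ) ^ γ * (‖φ z‖ ^ (j - 1) * ((1 - ‖z‖ ^ 2) * ‖deriv u z‖)) := by
    intro j z hz
    rw [norm_deriv_Ju_pow hu hφ hz]
    ring
  rw [hexp, and_comm,
    exists_bound_mul_one_sub_sq_rpow_iff hγ hφ_mem (hweight (deriv u)),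
    exists_bound_mul_one_sub_sq_rpow_iff (by positivity) hφ_mem (hweight fun z => u z * deriv φ z)]
  simp +contextual only [hI, hJ]
end
end

section
/- Let φ be an analytic self-map of D and 1 ≤ p < ∞, α > -1. Then sup_{z∈D}(1-|z|^2)|φ'(z)|/(1-|φ(z)|^2)^{(2+α+p)/p} < ∞ if and only if sup_{j≥1} j^{(α+2)/p}||φ^j||_B < ∞, where ||φ^j||_B is the Bloch norm of the j-th power of φ. -/
open MeasureTheory Set Filter Topology Metric

noncomputable section

/-!
With `γ = (α + 2) / p` and `β = γ + 1`, the formula `(φ^j)' = j φ^{j-1} φ'` turns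
`j^γ (1 - |z|²) |(φ^j)'(z)|` into `j^β |φ z|^{j-1} (1 - |z|²) |φ'(z)|`. Both conditions thus compare
`(1 - |z|²) |φ'(z)|` pointwise with a weight in `r = |φ z|`, and the theorem reduces to the fact that
`sup_j j^β r^{j-1} (1 - r²)^β` lies between two positive constants depending only on `β`. The upper
bound follows from `r^{j-1} ≤ exp (-(j-1)(1-r))` and `u^β ≤ β^β e^u`; for the lower bound take
`j ≈ 1 / (2 (1 - r))` and apply Bernoulli's inequality to `r^{j-1}`.
-/

open Real

theorem rpow_le_rpow_self_mul_exp {u β : ℝ} (hu : 0 ≤ u) (hβ : 0 < β) : u ^ β ≤ β ^ β * exp u := by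
  have hlin : u ≤ β * exp (u / β) := by
    have := add_one_le_exp (u / β)
    calc u = β * (u / β) := by field_simp
      _ ≤ β * exp (u / β) := by gcongr; linarith
  calc u ^ β ≤ (β * exp (u / β)) ^ β := by gcongr
    _ = β ^ β * exp u := by
      rw [mul_rpow hβ.le (exp_pos _).le, ← exp_mul, div_mul_cancel₀ u hβ.ne']

theorem pow_le_exp_neg_mul_one_sub {x : ℝ} (hx : 0 ≤ x) (n : ℕ) :
    x ^ n ≤ exp (-(n * (1 - x))) := by
  have h := add_one_le_exp (x - 1)
  calc x ^ n ≤ exp (x - 1) ^ n := by gcongr; linarith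
    _ = exp (-(n * (1 - x))) := by rw [← exp_nat_mul]; ring_nf

def blochWeight (β x : ℝ) (n : ℕ) : ℝ := ((n : ℝ) + 1) ^ β * x ^ n * (1 - x ^ 2) ^ β

theorem blochWeight_le {β x : ℝ} (hβ : 0 < β) (hx0 : 0 ≤ x) (hx1 : x ≤ 1) (n : ℕ) :
    blochWeight β x n ≤ 2 ^ β * β ^ β * exp 1 := by
  set u := ((n : ℝ) + 1) * (1 - x)
  have hu : 0 ≤ u := by positivity
  calc blochWeight β x n ≤ ((n : ℝ) + 1) ^ β * x ^ n * (2 * (1 - x)) ^ β := by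
        unfold blochWeight; gcongr <;> nlinarith
    _ = 2 ^ β * (u ^ β * x ^ n) := by
        rw [mul_rpow zero_le_two (by linarith), mul_rpow (by positivity) (by linarith)]; ring
    _ ≤ 2 ^ β * (β ^ β * exp u * exp (-(n * (1 - x)))) := by
        gcongr
        exacts [rpow_le_rpow_self_mul_exp hu hβ, pow_le_exp_neg_mul_one_sub hx0 n]
    _ = 2 ^ β * β ^ β * exp (1 - x) := by
        rw [mul_assoc _ (exp u), ← exp_add, mul_assoc]; congr 3; ring
    _ ≤ 2 ^ β * β ^ β * exp 1 := by gcongr; linarith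

theorem exists_one_le_two_rpow_mul_blochWeight {β w : ℝ} (hβ : 0 < β) (hw0 : 0 ≤ w) (hw1 : w < 1) :
    ∃ n : ℕ, 1 ≤ 2 ^ (β + 1) * blochWeight β w n := by
  set s := 1 - w
  have hs : 0 < s := by linarith
  -- `n ≈ 1 / (2 s)`: large enough that `(n + 1) (1 - w²) ≥ 1/2`, small enough that `w ^ n ≥ 1/2`.
  set n := ⌊1 / (2 * s)⌋₊
  have hn_le : (n : ℝ) * s ≤ 1 / 2 := by
    have := Nat.floor_le (a := 1 / (2 * s)) (by positivity)
    rw [le_div_iff₀ (by positivity)] at this; linarith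
  have hn_gt : 1 / 2 ≤ ((n : ℝ) + 1) * s := by
    have := Nat.lt_floor_add_one (1 / (2 * s))
    rw [div_lt_iff₀ (by positivity)] at this; linarith
  have hpow : 1 / 2 ≤ w ^ n := by
    have := one_add_mul_le_pow (a := -s) (by linarith) n
    rw [show 1 + -s = w by ring] at this; linarith
  have hprod : 1 / 2 ≤ ((n : ℝ) + 1) * (1 - w ^ 2) := by
    nlinarith
  refine ⟨n, ?_⟩
  calc (1 : ℝ) = 2 ^ (β + 1) * ((1 / 2) ^ β * (1 / 2)) := by
        rw [rpow_add_one two_ne_zero, div_rpow zero_le_one zero_le_two, one_rpow]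
        field_simp
    _ ≤ 2 ^ (β + 1) * ((((n : ℝ) + 1) * (1 - w ^ 2)) ^ β * w ^ n) := by gcongr
    _ = 2 ^ (β + 1) * blochWeight β w n := by
        rw [blochWeight, mul_rpow (by positivity) (by nlinarith)]; ring

theorem rpow_mul_pow_mul_le_of_le_rpow {β w A M : ℝ} (hβ : 0 < β) (hw0 : 0 ≤ w) (hw1 : w < 1)
    (hA : 0 ≤ A) (h : A ≤ M * (1 - w ^ 2) ^ β) (n : ℕ) :
    ((n : ℝ) + 1) ^ β * w ^ n * A ≤ 2 ^ β * β ^ β * exp 1 * M := by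
  have hw2 : 0 < (1 - w ^ 2) ^ β := rpow_pos_of_pos (by nlinarith) β
  have hM : 0 ≤ M := nonneg_of_mul_nonneg_left (hA.trans h) hw2
  calc ((n : ℝ) + 1) ^ β * w ^ n * A ≤ ((n : ℝ) + 1) ^ β * w ^ n * (M * (1 - w ^ 2) ^ β) := by
        gcongr
    _ = blochWeight β w n * M := by rw [blochWeight]; ring
    _ ≤ 2 ^ β * β ^ β * exp 1 * M := by gcongr; exact blochWeight_le hβ hw0 hw1.le n

theorem le_rpow_of_forall_rpow_mul_pow_mul_le {β w A M : ℝ} (hβ : 0 < β) (hw0 : 0 ≤ w) (hw1 : w < 1)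
    (hA : 0 ≤ A) (h : ∀ n : ℕ, ((n : ℝ) + 1) ^ β * w ^ n * A ≤ M) :
    A ≤ 2 ^ (β + 1) * M * (1 - w ^ 2) ^ β := by
  obtain ⟨n, hn⟩ := exists_one_le_two_rpow_mul_blochWeight hβ hw0 hw1
  calc A ≤ 2 ^ (β + 1) * blochWeight β w n * A := le_mul_of_one_le_left hA hn
    _ = 2 ^ (β + 1) * (((n : ℝ) + 1) ^ β * w ^ n * A) * (1 - w ^ 2) ^ β := by
        rw [blochWeight]; ring
    _ ≤ 2 ^ (β + 1) * M * (1 - w ^ 2) ^ β := by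
        gcongr
        exacts [rpow_nonneg (by nlinarith) β, h n]

theorem rpow_mul_pow_succ_le {γ r : ℝ} (hγ : -1 < γ) (hr0 : 0 ≤ r) (hr1 : r < 1) (n : ℕ) :
    ((n : ℝ) + 1) ^ γ * r ^ (n + 1) ≤
      2 ^ (γ + 1) * (γ + 1) ^ (γ + 1) * exp 1 * ((1 - r ^ 2) ^ (γ + 1))⁻¹ := by
  have hr2 : 0 < (1 - r ^ 2) ^ (γ + 1) := rpow_pos_of_pos (by nlinarith) _
  calc ((n : ℝ) + 1) ^ γ * r ^ (n + 1) ≤ ((n : ℝ) + 1) ^ (γ + 1) * r ^ n * 1 := by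
        rw [mul_one]
        exact mul_le_mul (rpow_le_rpow_of_exponent_le (by linarith) (by linarith))
          (pow_le_pow_of_le_one hr0 hr1.le n.le_succ) (by positivity) (by positivity)
    _ ≤ _ := rpow_mul_pow_mul_le_of_le_rpow (by linarith) hr0 hr1 zero_le_one
          (inv_mul_cancel₀ hr2.ne').ge n

theorem norm_deriv_pow_succ {𝕜 : Type*} [RCLike 𝕜] {φ : 𝕜 → 𝕜} {z : 𝕜}
    (hφ : DifferentiableAt 𝕜 φ z) (n : ℕ) :
    ‖deriv (φ ^ (n + 1)) z‖ = ((n : ℝ) + 1) * ‖φ z‖ ^ n * ‖deriv φ z‖ := by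
  rw [show φ ^ (n + 1) = fun w => φ w ^ (n + 1) from rfl, deriv_fun_pow hφ, norm_mul, norm_mul,
    RCLike.norm_natCast, norm_pow, Nat.add_sub_cancel, Nat.cast_succ]

theorem rpow_mul_norm_deriv_pow_succ {𝕜 : Type*} [RCLike 𝕜] {φ : 𝕜 → 𝕜} {z : 𝕜}
    (hφ : DifferentiableAt 𝕜 φ z) (γ c : ℝ) (n : ℕ) :
    ((n + 1 : ℕ) : ℝ) ^ γ * (c * ‖deriv (φ ^ (n + 1)) z‖) =
      ((n : ℝ) + 1) ^ (γ + 1) * ‖φ z‖ ^ n * (c * ‖deriv φ z‖) := by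
  rw [norm_deriv_pow_succ hφ, rpow_add_one (by positivity)]
  push_cast
  ring

/-- `sup_{z∈D}(1-|z|^2)|φ'(z)|/(1-|φ(z)|^2)^{(2+α+p)/p} < ∞` iff
`sup_{j≥1} j^{(α+2)/p} ‖φ^j‖_B < ∞` (Bloch norm `‖g‖_B = |g(0)| + sup (1-|z|^2)|g'(z)|`). -/
theorem stmt14 (p α : ℝ) (hp : 1 ≤ p) (hα : -1 < α) (φ : ℂ → ℂ)
    (hφ : DifferentiableOn ℂ φ UD) (hφm : MapsTo φ UD UD) :
    (∃ M : ℝ, ∀ z ∈ UD,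
      (1 - ‖z‖ ^ 2) * ‖deriv φ z‖ ≤ M * (1 - ‖φ z‖ ^ 2) ^ ((2 + α + p) / p)) ↔
    (∃ M : ℝ, ∀ j : ℕ, 1 ≤ j → ∀ z ∈ UD,
      (j : ℝ) ^ ((α + 2) / p) * (‖φ 0 ^ j‖ + (1 - ‖z‖ ^ 2) * ‖deriv (φ ^ j) z‖) ≤ M) := by
  set γ := (α + 2) / p
  have hγ : 0 < γ := div_pos (by linarith) (by linarith)
  rw [show (2 + α + p) / p = γ + 1 by simp only [γ]; field_simp; ring]
  have hφ1 (z : ℂ) (hz : z ∈ UD) : ‖φ z‖ < 1 := mem_ball_zero_iff.mp (hφm hz)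
  have hA (z : ℂ) (hz : z ∈ UD) : 0 ≤ (1 - ‖z‖ ^ 2) * ‖deriv φ z‖ := by
    have : 0 ≤ 1 - ‖z‖ ^ 2 := by nlinarith [norm_nonneg z, mem_ball_zero_iff.mp hz]
    positivity
  have hterm (n : ℕ) (z : ℂ) (hz : z ∈ UD) :=
    rpow_mul_norm_deriv_pow_succ (hφ.differentiableAt (isOpen_ball.mem_nhds hz)) γ (1 - ‖z‖ ^ 2) n
  constructor
  · rintro ⟨M, hM⟩
    set C := 2 ^ (γ + 1) * (γ + 1) ^ (γ + 1) * exp 1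
    refine ⟨C * ((1 - ‖φ 0‖ ^ 2) ^ (γ + 1))⁻¹ + C * M, fun j hj z hz => ?_⟩
    obtain ⟨n, rfl⟩ := Nat.exists_eq_add_of_le' hj
    rw [mul_add, hterm n z hz, norm_pow]
    push_cast
    exact add_le_add (rpow_mul_pow_succ_le (by linarith) (norm_nonneg _) (hφ1 0 (mem_ball_self one_pos)) n)
      (rpow_mul_pow_mul_le_of_le_rpow (by linarith) (norm_nonneg _) (hφ1 z hz) (hA z hz) (hM z hz) n)
  · rintro ⟨M, hM⟩
    refine ⟨2 ^ (γ + 1 + 1) * M, fun z hz => ?_⟩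
    refine le_rpow_of_forall_rpow_mul_pow_mul_le (by linarith) (norm_nonneg _) (hφ1 z hz) (hA z hz)
      fun n => ?_
    rw [← hterm n z hz]
    refine le_trans ?_ (hM (n + 1) (Nat.le_add_left 1 n) z hz)
    gcongr
    exact le_add_of_nonneg_left (norm_nonneg _)
end
end
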